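/- For all real numbers u and v with 0 < u ≤ 1 ≤ v, there exists a constant C > 0 such that for every natural number m and every x : Fin m → ℝ with u ≤ x j ≤ v for all j, one has ∏_{j} (x j + (x j)⁻¹)/2 ≥ 1 + C · ∑_{j} (x j − 1)², with the constant C independent of m. -/

import Mathlib

/-!
Since `(x + x⁻¹) / 2 = 1 + (x - 1)² / (2x)`, each factor is at least `1 + (x - 1)² / (2v)`
when `0 < x ≤ v`. Expanding a product `∏ (1 + aⱼ)` of factors with `aⱼ ≥ 0` and discarding
all mixed terms gives `∏ (1 + aⱼ) ≥ 1 + ∑ aⱼ`, so `C = 1 / (2v)` works for every `m`.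
-/

open Finset

theorem Finset.one_add_sum_le_prod_one_add {ι R : Type*} [CommSemiring R] [PartialOrder R]
    [IsOrderedRing R] (s : Finset ι) {a : ι → R} (ha : ∀ i ∈ s, 0 ≤ a i) :
    1 + ∑ i ∈ s, a i ≤ ∏ i ∈ s, (1 + a i) := by
  classical
  induction s using Finset.induction_on with
  | empty => simp
  | insert j s hj ih =>
    have haj : 0 ≤ a j := ha j (mem_insert_self j s)
    have hs : ∀ i ∈ s, 0 ≤ a i := fun i hi => ha i (mem_insert_of_mem hi)
    rw [sum_insert hj, prod_insert hj]
    calc 1 + (a j + ∑ i ∈ s, a i)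
        ≤ 1 + (a j + ∑ i ∈ s, a i) + a j * ∑ i ∈ s, a i :=
          le_add_of_nonneg_right (mul_nonneg haj (sum_nonneg hs))
      _ = (1 + a j) * (1 + ∑ i ∈ s, a i) := by ring
      _ ≤ (1 + a j) * ∏ i ∈ s, (1 + a i) :=
          mul_le_mul_of_nonneg_left (ih hs) (add_nonneg zero_le_one haj)

theorem add_inv_div_two_eq {x : ℝ} (hx : x ≠ 0) :
    (x + x⁻¹) / 2 = 1 + (x - 1) ^ 2 / (2 * x) := by
  field_simp
  ring

theorem one_add_sq_sub_one_div_le_add_inv_div_two {x v : ℝ} (hx : 0 < x) (hxv : x ≤ v) :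
    1 + (x - 1) ^ 2 / (2 * v) ≤ (x + x⁻¹) / 2 := by
  rw [add_inv_div_two_eq hx.ne']
  gcongr

theorem prod_ge_one_add_sum_sq (u v : ℝ) (hu : 0 < u) (h1v : 1 ≤ v) :
    ∃ C : ℝ, 0 < C ∧ ∀ (m : ℕ) (x : Fin m → ℝ),
      (∀ j, u ≤ x j) → (∀ j, x j ≤ v) →
      1 + C * ∑ j, (x j - 1) ^ 2 ≤ ∏ j, (x j + (x j)⁻¹) / 2 := by
  have hv : 0 < v := zero_lt_one.trans_le h1v
  refine ⟨1 / (2 * v), by positivity, fun m x hux hxv => ?_⟩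
  calc 1 + 1 / (2 * v) * ∑ j, (x j - 1) ^ 2
      = 1 + ∑ j, (x j - 1) ^ 2 / (2 * v) := by rw [mul_sum]; simp only [one_div_mul_eq_div]
    _ ≤ ∏ j, (1 + (x j - 1) ^ 2 / (2 * v)) :=
        one_add_sum_le_prod_one_add _ fun j _ => by positivity
    _ ≤ ∏ j, (x j + (x j)⁻¹) / 2 :=
        prod_le_prod (fun j _ => by positivity) fun j _ =>
          one_add_sq_sub_one_div_le_add_inv_div_two (hu.trans_le (hux j)) (hxv j)
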